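/- arXiv:2412.16586 — 4 statements merged into one kernel-verified Lean document; each statement's English description precedes it below -/
import Mathlib

section
/- Let v ∈ ℝⁿ₊ with coordinates sorted as v_{s₁} ≤ ⋯ ≤ v_{sₙ}. If S is a weak (k, ε)-approximate minimum index set for v with k ∈ [n−1], and a_{k+1} ∈ [n] − S satisfies v_{a_{k+1}} ≤ v_{s_{k+1}} + ε, then S ∪ {a_{k+1}} is a weak (k+1, ε)-approximate minimum index set for v. -/
/-- `S` is a weak `(k, ε)`-approximate minimum index set for `v`, where `s` is a
permutation sorting the coordinates of `v` in nondecreasing order. -/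
def WeakApproxMinSet {n : ℕ} (k : ℕ) (hk : k ≤ n) (v : Fin n → ℝ)
    (s : Equiv.Perm (Fin n)) (ε : ℝ) (S : Finset (Fin n)) : Prop :=
  S.card = k ∧ ∃ e : Fin k → Fin n, Function.Injective e ∧
    Finset.image e Finset.univ = S ∧
    ∀ j : Fin k, v (s (Fin.castLE hk j)) ≤ v (e j) ∧ v (e j) ≤ v (s (Fin.castLE hk j)) + ε

/-!
Enumerate `insert a S` as the enumeration of `S` followed by `a`. Every element of this
enumeration lies within `ε` above the matching order statistic of `v`, and sorting the
enumeration by value preserves that bound, because the bounds `v (s j) + ε` are themselves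
nondecreasing. The sorted enumeration also dominates the order statistics, since `j + 1`
distinct indices cannot all lie among the `j` smallest positions of `s`.
-/

open Function

lemma Fin.exists_le_and_le_val_of_injective {m n : ℕ} {φ : Fin m → Fin n}
    (hφ : Injective φ) (j : Fin m) : ∃ i ≤ j, (j : ℕ) ≤ φ i := by
  by_contra! h
  have hsub : ((Finset.Iic j).image (Fin.val ∘ φ)) ⊆ Finset.range j := by
    simpa [Finset.image_subset_iff] using h
  have := Finset.card_le_card hsub
  rw [Finset.card_image_of_injective _ (Fin.val_injective.comp hφ), Fin.card_Iic,
    Finset.card_range] at this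
  omega

lemma le_of_monotone_comp_perm {α : Type*} [Preorder α] {m : ℕ} {f w : Fin m → α}
    (hw : Monotone w) (hfw : ∀ i, f i ≤ w i) {σ : Equiv.Perm (Fin m)}
    (hσ : Monotone (f ∘ σ)) (j : Fin m) : f (σ j) ≤ w j := by
  obtain ⟨i, hij, hji⟩ := Fin.exists_le_and_le_val_of_injective σ.symm.injective j
  calc f (σ j) ≤ f (σ (σ.symm i)) := hσ (Fin.le_def.mpr hji)
    _ = f i := by rw [Equiv.apply_symm_apply]
    _ ≤ w i := hfw i
    _ ≤ w j := hw hij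

lemma le_of_monotone_comp_injective {α : Type*} [Preorder α] {m n : ℕ} (hmn : m ≤ n)
    {v : Fin n → α} {s : Equiv.Perm (Fin n)} (hs : Monotone (v ∘ s)) {g : Fin m → Fin n}
    (hg : Injective g) (hvg : Monotone (v ∘ g)) (j : Fin m) :
    v (s (Fin.castLE hmn j)) ≤ v (g j) := by
  obtain ⟨i, hij, hji⟩ := Fin.exists_le_and_le_val_of_injective (s.symm.injective.comp hg) j
  calc v (s (Fin.castLE hmn j)) ≤ v (s (s.symm (g i))) := hs (Fin.le_def.mpr hji)
    _ = v (g i) := by rw [Equiv.apply_symm_apply]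
    _ ≤ v (g j) := hvg hij

lemma weakApproxMinSet_image_of_le_add {n k : ℕ} (hk : k ≤ n) {v : Fin n → ℝ}
    {s : Equiv.Perm (Fin n)} (hs : Monotone (v ∘ s)) {ε : ℝ} {g : Fin k → Fin n}
    (hg : Injective g) (hgv : ∀ j, v (g j) ≤ v (s (Fin.castLE hk j)) + ε) :
    WeakApproxMinSet k hk v s ε (Finset.univ.image g) := by
  set σ := Tuple.sort (v ∘ g)
  have hsorted : Monotone (v ∘ g ∘ σ) := Tuple.monotone_sort (v ∘ g)
  have hbound : Monotone fun j : Fin k => v (s (Fin.castLE hk j)) + ε :=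
    fun i j hij => add_le_add_left (hs ((Fin.strictMono_castLE hk).monotone hij)) ε
  refine ⟨by simp [Finset.card_image_of_injective _ hg], g ∘ σ, hg.comp σ.injective, ?_,
    fun j => ⟨le_of_monotone_comp_injective hk hs (hg.comp σ.injective) hsorted j,
      le_of_monotone_comp_perm (f := v ∘ g) hbound hgv hsorted j⟩⟩
  rw [← Finset.image_image, Finset.image_univ_equiv]

lemma Finset.image_univ_snoc {α : Type*} [DecidableEq α] {m : ℕ} (e : Fin m → α) (a : α) :
    Finset.univ.image (Fin.snoc e a : Fin (m + 1) → α) = insert a (Finset.univ.image e) := by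
  apply Finset.coe_injective
  simp

theorem weak_error_tolerant_incrementability {n k : ℕ} (hkn : k + 1 ≤ n)
    (v : Fin n → ℝ)
    (s : Equiv.Perm (Fin n)) (hs : Monotone (v ∘ s)) (ε : ℝ)
    (S : Finset (Fin n)) (hS : WeakApproxMinSet k (by omega) v s ε S)
    (a : Fin n) (ha : a ∉ S)
    (hval : v a ≤ v (s ⟨k, by omega⟩) + ε) :
    WeakApproxMinSet (k + 1) hkn v s ε (insert a S) := by
  obtain ⟨-, e, he, rfl, hbd⟩ := hS
  rw [← Finset.image_univ_snoc]
  refine weakApproxMinSet_image_of_le_add hkn hs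
    (Fin.snoc_injective_of_injective he (by simpa using ha)) fun j => ?_
  induction j using Fin.lastCases with
  | last => rw [Fin.snoc_last]; exact hval
  | cast j => simpa using (hbd j).2
end

section
/- For every constant c ≥ 1 there exist n, k, ε > 0, and a vector v ∈ ℝⁿ₊ together with a set S ⊆ [n] of size k, such that S is a weak (k, ε)-approximate minimum index set for v but S is not a strong (k, cε)-approximate minimum index set for v. -/
/-- `S` is a strong `(k, ε)`-approximate minimum index set for `v`. -/
def StrongApproxMinSet {n : ℕ} (k : ℕ) (v : Fin n → ℝ) (ε : ℝ) (S : Finset (Fin n)) : Prop :=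
  S.card = k ∧ ∀ j ∉ S, ∀ i ∈ S, v i ≤ v j + ε

/-! Take `v i = i` on `{0, …, m + 1}` with `m = ⌈c⌉₊` and `S = {1, …, m + 1}`. Matching the
`j`-th element of `S` with the `j`-th smallest coordinate overshoots it by exactly `1`, so `S` is
weakly `(m + 1, 1)`-approximate; but the excluded index `0` lies `m + 1 > c` below the largest
element of `S`, so `S` is not strongly `(m + 1, c)`-approximate. -/

open Finset

theorem weakApproxMinSet_image_succ {m : ℕ} {v : Fin (m + 1) → ℝ} (hv : Monotone v) {ε : ℝ}
    (hgap : ∀ j : Fin m, v j.succ ≤ v j.castSucc + ε) :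
    WeakApproxMinSet m m.le_succ v 1 ε (univ.image Fin.succ) := by
  refine ⟨?_, Fin.succ, Fin.succ_injective m, rfl, fun j => ?_⟩
  · rw [card_image_of_injective _ (Fin.succ_injective m), card_univ, Fintype.card_fin]
  have hcast : Fin.castLE m.le_succ j = j.castSucc := rfl
  rw [Equiv.Perm.one_apply, hcast]
  exact ⟨hv (Fin.castSucc_lt_succ (i := j)).le, hgap j⟩

theorem not_strongApproxMinSet_image_succ {m : ℕ} {v : Fin (m + 2) → ℝ} {ε : ℝ}
    (hspread : v 0 + ε < v (Fin.last (m + 1))) :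
    ¬ StrongApproxMinSet (m + 1) v ε (univ.image Fin.succ) := by
  rintro ⟨-, hstrong⟩
  have hzero : (0 : Fin (m + 2)) ∉ univ.image Fin.succ := by simp
  have hlast : Fin.last (m + 1) ∈ univ.image Fin.succ :=
    mem_image.mpr ⟨Fin.last m, mem_univ _, Fin.succ_last m⟩
  exact (hstrong 0 hzero _ hlast).not_gt hspread

theorem weak_not_strong_general (c : ℝ) :
    ∃ (n k : ℕ) (hk : k ≤ n) (ε : ℝ) (_ : 0 < ε) (v : Fin n → ℝ)
      (_ : ∀ i, 0 ≤ v i) (s : Equiv.Perm (Fin n)) (_ : Monotone (v ∘ s))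
      (S : Finset (Fin n)),
      WeakApproxMinSet k hk v s ε S ∧ ¬ StrongApproxMinSet k v (c * ε) S := by
  set m := ⌈c⌉₊
  have hmono : Monotone fun i : Fin (m + 2) => (i : ℝ) :=
    Nat.mono_cast.comp Fin.val_strictMono.monotone
  refine ⟨m + 2, m + 1, (m + 1).le_succ, 1, one_pos, fun i => (i : ℝ),
    fun i => Nat.cast_nonneg _, 1, hmono, univ.image Fin.succ,
    weakApproxMinSet_image_succ hmono fun j => by simp, not_strongApproxMinSet_image_succ ?_⟩
  have hcm : c ≤ m := Nat.le_ceil c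
  simp only [Fin.val_zero, Fin.val_last, Nat.cast_zero, Nat.cast_add, Nat.cast_one]
  linarith

/-- For every constant `c ≥ 1` there is a nonnegative vector `v`, a precision `ε > 0`,
and a set `S` of size `k` that is a weak `(k, ε)`-approximate minimum index set for `v`
but not a strong `(k, cε)`-approximate minimum index set for `v`. -/
theorem weak_not_strong (c : ℝ) (hc : 1 ≤ c) :
    ∃ (n k : ℕ) (hk : k ≤ n) (ε : ℝ) (_ : 0 < ε) (v : Fin n → ℝ)
      (_ : ∀ i, 0 ≤ v i) (s : Equiv.Perm (Fin n)) (_ : Monotone (v ∘ s))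
      (S : Finset (Fin n)),
      WeakApproxMinSet k hk v s ε S ∧ ¬ StrongApproxMinSet k v (c * ε) S :=
  weak_not_strong_general c
end

section
/- Let v ∈ ℝⁿ₊ with coordinates sorted as v_{s₁} ≤ ⋯ ≤ v_{sₙ}, let k ∈ [n], and suppose a sequence a₁, …, a_k of distinct indices is produced where at the j-th step (j = 1, …, k), the index a_j ∈ [n] − {a₁, …, a_{j−1}} satisfies v_{a_j} ≤ w_j + ε, where w_j is the (k−j+1)-th smallest value among the coordinates of v with indices in [n] − {a₁, …, a_{j−1}}. Then {a₁, …, a_k} is a weak (k, ε)-approximate minimum index set for v. -/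
/-- The `(r+1)`-th smallest value (0-based rank `r`) among the coordinates of `v`
with indices in `T`. -/
noncomputable def kthSmallest {n : ℕ} (T : Finset (Fin n)) (v : Fin n → ℝ) (r : ℕ) : ℝ :=
  ((T.val.map v).sort (· ≤ ·)).getD r 0

/-
Sort the chosen indices by value, `e = a ∘ σ`. For a monotone tuple `f`, `f j ≤ c` iff more than
`j` entries are `≤ c`; applied to `v ∘ s` and `v ∘ e` this turns both bounds into counting.
The lower bound is then immediate. For the upper bound, with `c = v (s j)`, call step `m` good if
`v (a m) ≤ c + ε`. At a bad step the `(k - m)`-th smallest remaining value exceeds `c`, so at most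
`k - 1 - m` of the more than `j` indices with value `≤ c` are still unchosen, and the others were
chosen at good steps before `m`. Induction over the steps gives more than `j` good steps.
-/

open Finset Function

theorem List.card_filter_get_eq_countP {α : Type*} (l : List α) (p : α → Prop) [DecidablePred p] :
    #{m : Fin l.length | p (l.get m)} = l.countP (p ·) := by
  calc #{m : Fin l.length | p (l.get m)} = Multiset.countP p (univ.val.map l.get) := by
        rw [Multiset.countP_map]; rfl
    _ = l.countP (p ·) := by rw [Fin.univ_val_map, List.ofFn_get, Multiset.coe_countP]

theorem kthSmallest_le_of_lt_card {n : ℕ} {T : Finset (Fin n)} {v : Fin n → ℝ} {r : ℕ} {c : ℝ}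
    (h : r < #{i ∈ T | v i ≤ c}) : kthSmallest T v r ≤ c := by
  set l := (T.val.map v).sort (· ≤ ·)
  have hcount : #{m : Fin l.length | l.get m ≤ c} = #{i ∈ T | v i ≤ c} := by
    rw [l.card_filter_get_eq_countP (· ≤ c), ← Multiset.coe_countP, Multiset.sort_eq,
      Multiset.countP_map]
    rfl
  rw [← hcount] at h
  have hr : r < l.length := h.trans_le ((card_le_univ _).trans_eq (Fintype.card_fin _))
  rw [kthSmallest, List.getD_eq_getElem _ _ hr]
  exact (Tuple.lt_card_le_iff_apply_le_of_monotone (j := ⟨r, hr⟩)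
    (Multiset.pairwise_sort _ _).sortedLE.monotone_get).1 h

theorem card_filter_comp_of_injective {ι κ : Type*} [Fintype ι] [DecidableEq κ] {e : ι → κ}
    (he : Injective e) (p : κ → Prop) [DecidablePred p] :
    #{m | p (e m)} = #{i ∈ univ.image e | p i} := by
  rw [filter_image, card_image_of_injective _ he]

section GreedySelection

variable {n k : ℕ} {v : Fin n → ℝ} {a : Fin k → Fin n} {ε c : ℝ}

theorem card_filter_le_of_step_gt (hε : 0 ≤ ε) {j : Fin k}
    (hj : v (a j) ≤ kthSmallest (univ \ image a {m | m < j}) v (k - 1 - (j : ℕ)) + ε)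
    (hbad : c + ε < v (a j)) :
    #{i | v i ≤ c} ≤ k - 1 - j + #{m | m < j ∧ v (a m) ≤ c + ε} := by
  have hrest : #{i ∈ univ \ image a {m | m < j} | v i ≤ c} ≤ k - 1 - j := by
    by_contra! h
    linarith [kthSmallest_le_of_lt_card h]
  calc #{i | v i ≤ c}
      ≤ #({i ∈ univ \ image a {m | m < j} | v i ≤ c} ∪
          image a {m | m < j ∧ v (a m) ≤ c + ε}) := by
        refine card_le_card fun i hi => ?_
        simp only [mem_filter, mem_univ, true_and] at hi
        by_cases hi' : i ∈ image a {m | m < j}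
        · obtain ⟨m, hm, rfl⟩ := mem_image.1 hi'
          exact mem_union_right _ (mem_image_of_mem a (by simp_all; linarith))
        · exact mem_union_left _ (by simp_all)
    _ ≤ k - 1 - j + #{m | m < j ∧ v (a m) ≤ c + ε} :=
        (card_union_le _ _).trans (add_le_add hrest card_image_le)

theorem le_card_filter_of_steps (hε : 0 ≤ ε)
    (hstep : ∀ j : Fin k,
      v (a j) ≤ kthSmallest (univ \ image a {m | m < j}) v (k - 1 - (j : ℕ)) + ε)
    {p : ℕ} (hpk : p ≤ k) (hpc : p ≤ #{i | v i ≤ c}) :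
    p ≤ #{m | v (a m) ≤ c + ε} := by
  have hsteps : ∀ m ≤ k, m + p ≤ k + #{j : Fin k | (j : ℕ) < m ∧ v (a j) ≤ c + ε} := by
    intro m
    induction m with
    | zero => intro _; omega
    | succ m ih =>
      intro hm
      set j : Fin k := ⟨m, hm⟩
      have hsub : ({j' | (j' : ℕ) < m ∧ v (a j') ≤ c + ε} : Finset (Fin k)) ⊆
          ({j' | (j' : ℕ) < m + 1 ∧ v (a j') ≤ c + ε} : Finset (Fin k)) := by
        intro j' hj'
        simp only [mem_filter, mem_univ, true_and] at hj' ⊢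
        exact ⟨by omega, hj'.2⟩
      by_cases hgood : v (a j) ≤ c + ε
      · have := card_lt_card <| (ssubset_iff_of_subset hsub).2 ⟨j, by simp [j, hgood], by simp [j]⟩
        omega
      · have := card_filter_le_of_step_gt hε (hstep j) (not_le.1 hgood)
        simp only [j, Fin.lt_def] at this
        have := card_le_card hsub
        omega
  simpa using hsteps k le_rfl

end GreedySelection

-- Steps are 0-based: step `j` is step `j + 1` of the paper, and rank `k - 1 - j` of `kthSmallest`
-- is the paper's `(k - j)`-th smallest value.
theorem weak_algorithmic_construction_general {n k : ℕ} (hk : k ≤ n)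
    (v : Fin n → ℝ)
    (s : Equiv.Perm (Fin n)) (hs : Monotone (v ∘ s)) (ε : ℝ) (hε : 0 < ε)
    (a : Fin k → Fin n) (ha : Function.Injective a)
    (hstep : ∀ j : Fin k,
      v (a j) ≤ kthSmallest
        (Finset.univ \ Finset.image a (Finset.univ.filter fun m : Fin k => m < j))
        v (k - 1 - (j : ℕ)) + ε) :
    WeakApproxMinSet k hk v s ε (Finset.image a Finset.univ) := by
  classical
  have hA : #(univ.image a) = k := by rw [card_image_of_injective _ ha, card_fin]
  set e := a ∘ Tuple.sort (v ∘ a)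
  have he : Injective e := ha.comp (Equiv.injective _)
  have he_mono : Monotone (v ∘ e) := Tuple.monotone_sort (v ∘ a)
  have he_image : univ.image e = univ.image a := by
    rw [← image_image, image_univ_equiv]
  have hs_card (c : ℝ) : #{m | v (s m) ≤ c} = #{i | v i ≤ c} := by
    rw [card_filter_comp_of_injective s.injective (v · ≤ c), image_univ_equiv]
  have he_card (c : ℝ) : #{m | v (e m) ≤ c} = #{m | v (a m) ≤ c} := by
    rw [card_filter_comp_of_injective he (v · ≤ c), card_filter_comp_of_injective ha (v · ≤ c),
      he_image]
  refine ⟨hA, e, he, he_image, fun j => ⟨?_, ?_⟩⟩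
  · refine (Tuple.lt_card_le_iff_apply_le_of_monotone (j := Fin.castLE hk j) hs).1 ?_
    calc (j : ℕ) < #{m | v (e m) ≤ v (e j)} :=
          (Tuple.lt_card_le_iff_apply_le_of_monotone he_mono).2 le_rfl
      _ = #{i ∈ univ.image e | v i ≤ v (e j)} := card_filter_comp_of_injective he (v · ≤ v (e j))
      _ ≤ #{i | v i ≤ v (e j)} := card_le_card (filter_subset_filter _ (subset_univ _))
      _ = #{m | v (s m) ≤ v (e j)} := (hs_card _).symm
  · refine (Tuple.lt_card_le_iff_apply_le_of_monotone he_mono).1 ?_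
    change (j : ℕ) < #{m | v (e m) ≤ _}
    rw [he_card]
    refine le_card_filter_of_steps hε.le hstep j.isLt ?_
    rw [← hs_card]
    exact (Tuple.lt_card_le_iff_apply_le_of_monotone (j := Fin.castLE hk j) hs).2 le_rfl

/-- Algorithmic construction of a weak approximate minimum index set: at step `j`
(0-based; step `j+1` in 1-based terms) an index `a j`, not chosen before, is found
whose value is at most `ε` more than the `(k−j)`-th smallest (1-based) value among
the not-yet-chosen coordinates.  Then `{a 0, …, a (k−1)}` is a weak
`(k, ε)`-approximate minimum index set for `v`. -/
theorem weak_algorithmic_construction {n k : ℕ} (hk : k ≤ n)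
    (v : Fin n → ℝ) (hv : ∀ i, 0 ≤ v i)
    (s : Equiv.Perm (Fin n)) (hs : Monotone (v ∘ s)) (ε : ℝ) (hε : 0 < ε)
    (a : Fin k → Fin n) (ha : Function.Injective a)
    (hstep : ∀ j : Fin k,
      v (a j) ≤ kthSmallest
        (Finset.univ \ Finset.image a (Finset.univ.filter fun m : Fin k => m < j))
        v (k - 1 - (j : ℕ)) + ε) :
    WeakApproxMinSet k hk v s ε (Finset.image a Finset.univ) :=
  weak_algorithmic_construction_general hk v s hs ε hε a ha hstep
end

section
/- Let v ∈ ℝⁿ with all entries in [0,1], sorted as v_{s₁} ≤ ⋯ ≤ v_{sₙ}. For each i ∈ [n], let (α_ν^{(i)})_ν be normalized amplitudes supported on ν with |ν − v_i| ≤ ε. Let v_g ∈ [−ε, 1+ε] satisfy v_{s_k} − ε ≤ v_g ≤ v_{s_k} + 3ε, and define a = (1/n) ∑_{i, ν : ν ≤ v_g − 5ε} |α_ν^{(i)}|². Then a ≤ k/n. -/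
/-!
An index `i` with `v i ≥ v_{s_k}` carries no amplitude at `ν ≤ v_g − 5ε`, since its support lies
above `v i − ε ≥ v_{s_k} − ε > v_g − 4ε`. Fewer than `k` indices have `v i < v_{s_k}`, and each
contributes weight at most `1`.
-/

open scoped Classical

open Finset

theorem card_filter_lt_apply_perm_le {α : Type*} [Preorder α] {n : ℕ} {f : Fin n → α}
    {s : Equiv.Perm (Fin n)} (hs : Monotone (f ∘ s)) (j : Fin n) :
    #{i | f i < f (s j)} ≤ j := by
  have hmaps : ∀ i ∈ ({i | f i < f (s j)} : Finset (Fin n)), s.symm i ∈ Iio j := by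
    intro i hi
    rw [mem_filter] at hi
    rw [mem_Iio, ← not_le]
    intro hji
    have hle : f (s j) ≤ f i := by simpa using hs hji
    exact hle.not_gt hi.2
  calc #{i | f i < f (s j)} ≤ #(Iio j) :=
        card_le_card_of_injOn _ hmaps s.symm.injective.injOn
    _ = j := Fin.card_Iio j

theorem sum_filter_sq_norm_eq_zero_of_lt {ι E : Type*} [Fintype ι] [NormedAddCommGroup E]
    {α : ι → E} {ν : ι → ℝ} {c ε t : ℝ} (hsupp : ∀ m, α m ≠ 0 → |ν m - c| ≤ ε)
    (ht : t < c - ε) : ∑ m with ν m ≤ t, ‖α m‖ ^ 2 = 0 := by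
  refine sum_eq_zero fun m hm => ?_
  rw [mem_filter] at hm
  by_cases hα : α m = 0
  · simp [hα]
  · linarith [(abs_le.mp (hsupp m hα)).1]

theorem sum_filter_sq_norm_le_one {ι E : Type*} [Fintype ι] [NormedAddCommGroup E]
    {α : ι → E} (hnorm : ∑ m, ‖α m‖ ^ 2 = 1) (p : ι → Prop) [DecidablePred p] :
    ∑ m with p m, ‖α m‖ ^ 2 ≤ 1 :=
  hnorm ▸ sum_le_sum_of_subset_of_nonneg (filter_subset _ _) fun _ _ _ => by positivity

/-- Amplitude bound for the strong-minimum finding algorithm: if `v_g` is within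
`[v_{s_k} − ε, v_{s_k} + 3ε]` and each index `i` carries normalized amplitudes
supported on estimates `ε`-close to `v i`, then the total probability weight of
estimates at most `v_g − 5ε` is at most `k/n`. -/
theorem amplitude_bound_strong_min {n d k : ℕ} (hk1 : 1 ≤ k) (hk : k ≤ n)
    (v : Fin n → ℝ)
    (s : Equiv.Perm (Fin n)) (hs : Monotone (v ∘ s))
    (ε : ℝ) (hε : ε ∈ Set.Ioo (0 : ℝ) (1 / 2))
    (ν : Fin d → ℝ) (α : Fin n → Fin d → ℂ)
    (hsupp : ∀ i m, α i m ≠ 0 → |ν m - v i| ≤ ε)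
    (hnorm : ∀ i, ∑ m, ‖α i m‖ ^ 2 = 1)
    (vg : ℝ)
    (hvgu : vg ≤ v (s ⟨k - 1, by omega⟩) + 3 * ε) :
    (1 / n) * ∑ i, ∑ m ∈ Finset.univ.filter (fun m => ν m ≤ vg - 5 * ε), ‖α i m‖ ^ 2 ≤
      (k : ℝ) / n := by
  set j : Fin n := ⟨k - 1, by omega⟩
  set w : Fin n → ℝ := fun i => ∑ m with ν m ≤ vg - 5 * ε, ‖α i m‖ ^ 2
  have hw_supp : ∀ i, w i ≠ 0 → v i < v (s j) := by
    intro i hwi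
    by_contra! hi
    exact hwi (sum_filter_sq_norm_eq_zero_of_lt (hsupp i) (by linarith [hε.1]))
  have hcard : #{i | v i < v (s j)} ≤ k :=
    (card_filter_lt_apply_perm_le hs j).trans (Nat.sub_le k 1)
  calc (1 / n) * ∑ i, w i = (1 / n) * ∑ i with v i < v (s j), w i := by
        rw [sum_filter_of_ne fun i _ => hw_supp i]
    _ ≤ (1 / n) * (#{i | v i < v (s j)} • 1) := by
        gcongr
        exact sum_le_card_nsmul _ _ _ fun i _ => sum_filter_sq_norm_le_one (hnorm i) _
    _ ≤ (k : ℝ) / n := by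
        rw [nsmul_one, one_div_mul_eq_div]
        gcongr
end
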